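/- For ρ ≥ 0, t > 0, κ ∈ ℝ, and λ > 0, the volume of the set {(α₁,α₂,β₁,…,β_ρ) ∈ ℝ^(ρ+2) : α₁² + (κα₁ + λα₂)² ≤ 1/t² and β₁² + ⋯ + β_ρ² ≤ t(α₁² + α₂²)} equals (π^(ρ/2) / ((ρ+2)·Γ(ρ/2+1)·λ·t^((ρ+4)/2))) · ∫₀^{2π} (cos²θ + (1/λ²)(sinθ - κcosθ)²)^(ρ/2) dθ. -/

import Mathlib

/-!
Integrating first over `β` (Fubini), the fibre over `(α₁, α₂)` is a Euclidean ball of squared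
radius `t (α₁² + α₂²)`, of volume `π^(ρ/2) / Γ(ρ/2 + 1) · (t (α₁² + α₂²))^(ρ/2)`. The shear
`(α₁, α₂) ↦ (α₁, κ α₁ + λ α₂)`, of determinant `λ`, maps the base onto the disk of radius `1/t`,
and in polar coordinates on that disk the integrand is `t^(ρ/2) r^ρ` times the angular factor, so
the integral splits into `∫₀^{1/t} r^(ρ+1) dr = t^(-(ρ+2)) / (ρ+2)` and the integral over `θ`.
-/

open MeasureTheory Real Set
open scoped ENNReal

theorem volume_setOf_sum_sq_le (ι : Type*) [Fintype ι] {R : ℝ} (hR : 0 ≤ R) :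
    volume {x : ι → ℝ | ∑ i, x i ^ 2 ≤ R} =
      ENNReal.ofReal (π ^ ((Fintype.card ι : ℝ) / 2) / Gamma ((Fintype.card ι : ℝ) / 2 + 1)) *
        ENNReal.ofReal (R ^ ((Fintype.card ι : ℝ) / 2)) := by
  rcases isEmpty_or_nonempty ι with hι | hι
  · simp [hR, volume_pi]
  have hball : {x : ι → ℝ | ∑ i, x i ^ 2 ≤ R} =
      WithLp.toLp 2 ⁻¹' Metric.closedBall (0 : EuclideanSpace ℝ ι) √R := by
    ext x
    simp [EuclideanSpace.norm_eq, Real.sqrt_le_sqrt_iff hR]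
  rw [hball, (PiLp.volume_preserving_toLp ι).measure_preimage
    measurableSet_closedBall.nullMeasurableSet, EuclideanSpace.volume_closedBall,
    ← ENNReal.ofReal_pow (sqrt_nonneg R), mul_comm, rpow_div_two_eq_sqrt _ pi_pos.le,
    rpow_div_two_eq_sqrt _ hR, rpow_natCast, rpow_natCast]

theorem prod_volume_setOf_mem_and_sum_sq_le {X : Type*} [MeasurableSpace X] (μ : Measure X)
    [SFinite μ] (ι : Type*) [Fintype ι] {E : Set X} (hE : MeasurableSet E) {f : X → ℝ}
    (hf : Measurable f) (hf0 : ∀ x ∈ E, 0 ≤ f x) :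
    μ.prod volume {p : X × (ι → ℝ) | p.1 ∈ E ∧ ∑ i, p.2 i ^ 2 ≤ f p.1} =
      ENNReal.ofReal (π ^ ((Fintype.card ι : ℝ) / 2) / Gamma ((Fintype.card ι : ℝ) / 2 + 1)) *
        ∫⁻ x in E, ENNReal.ofReal (f x ^ ((Fintype.card ι : ℝ) / 2)) ∂μ := by
  have hS : MeasurableSet {p : X × (ι → ℝ) | p.1 ∈ E ∧ ∑ i, p.2 i ^ 2 ≤ f p.1} :=
    (measurable_fst hE).inter (measurableSet_le (by fun_prop) (hf.comp measurable_fst))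
  have hfiber (x : X) :
      volume (Prod.mk x ⁻¹' {p : X × (ι → ℝ) | p.1 ∈ E ∧ ∑ i, p.2 i ^ 2 ≤ f p.1}) =
        E.indicator (fun x ↦ volume {y : ι → ℝ | ∑ i, y i ^ 2 ≤ f x}) x := by
    by_cases hx : x ∈ E <;> simp [hx, Set.preimage]
  rw [Measure.prod_apply hS, lintegral_congr hfiber, lintegral_indicator hE,
    ← lintegral_const_mul' _ _ ENNReal.ofReal_ne_top]
  exact setLIntegral_congr_fun hE fun x hx ↦ volume_setOf_sum_sq_le ι (hf0 x hx)

theorem setLIntegral_preimage_comp_linearMap {E : Type*} [NormedAddCommGroup E] [NormedSpace ℝ E]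
    [MeasurableSpace E] [BorelSpace E] [FiniteDimensional ℝ E] (μ : Measure E)
    [μ.IsAddHaarMeasure] {L : E →ₗ[ℝ] E} (hL : LinearMap.det L ≠ 0) {S : Set E}
    (hS : MeasurableSet S) {F : E → ℝ≥0∞} (hF : Measurable F) :
    ∫⁻ x in L ⁻¹' S, F (L x) ∂μ = ENNReal.ofReal |(LinearMap.det L)⁻¹| * ∫⁻ y in S, F y ∂μ := by
  have hLm : Measurable L := L.continuous_of_finiteDimensional.measurable
  rw [← lintegral_indicator (hS.preimage hLm), ← lintegral_indicator hS, ← smul_eq_mul,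
    ← lintegral_smul_measure, ← Measure.map_linearMap_addHaar_eq_smul_addHaar μ hL,
    lintegral_map (hF.indicator hS) hLm]
  rfl

noncomputable def shear (κ l : ℝ) : ℝ × ℝ →ₗ[ℝ] ℝ × ℝ :=
  Matrix.toLin (Module.Basis.finTwoProd ℝ) (Module.Basis.finTwoProd ℝ) !![1, 0; κ, l]

theorem shear_apply (κ l : ℝ) (x : ℝ × ℝ) : shear κ l x = (x.1, κ * x.1 + l * x.2) := by
  simp [shear, Matrix.toLin_finTwoProd_apply]

theorem det_shear (κ l : ℝ) : LinearMap.det (shear κ l) = l := by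
  simp [shear, LinearMap.det_toLin, Matrix.det_fin_two_of]

theorem setLIntegral_disk_eq_polarCoord {R : ℝ} (hR : 0 ≤ R) (f : ℝ × ℝ → ℝ≥0∞) :
    ∫⁻ y in {y : ℝ × ℝ | y.1 ^ 2 + y.2 ^ 2 ≤ R ^ 2}, f y =
      ∫⁻ p in Ioc 0 R ×ˢ Ioo (-π) π, ENNReal.ofReal p.1 * f (polarCoord.symm p) := by
  have hD : MeasurableSet {y : ℝ × ℝ | y.1 ^ 2 + y.2 ^ 2 ≤ R ^ 2} :=
    measurableSet_le (by fun_prop) measurable_const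
  have htarget : polarCoord.symm ⁻¹' {y | y.1 ^ 2 + y.2 ^ 2 ≤ R ^ 2} ∩ polarCoord.target =
      Ioc 0 R ×ˢ Ioo (-π) π := by
    ext ⟨r, θ⟩
    simp only [polarCoord_target, polarCoord_symm_apply, mem_inter_iff, mem_prod, mem_Ioi,
      mem_preimage, mem_ofPred_eq, mem_Ioc]
    rw [show (r * cos θ) ^ 2 + (r * sin θ) ^ 2 = r ^ 2 by
      linear_combination r ^ 2 * cos_sq_add_sin_sq θ]
    constructor
    · rintro ⟨hrR, hr, hθ⟩
      exact ⟨⟨hr, (sq_le_sq₀ hr.le hR).1 hrR⟩, hθ⟩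
    · rintro ⟨⟨hr, hrR⟩, hθ⟩
      exact ⟨(sq_le_sq₀ hr.le hR).2 hrR, hr, hθ⟩
  rw [← lintegral_indicator hD, ← lintegral_comp_polarCoord_symm, ← htarget,
    ← setLIntegral_indicator (hD.preimage continuous_polarCoord_symm.measurable)]
  refine lintegral_congr fun p ↦ ?_
  rw [indicator_mul_right, smul_eq_mul]
  rfl

theorem setLIntegral_prod_mul {α β : Type*} [MeasurableSpace α] [MeasurableSpace β]
    (μ : Measure α) (ν : Measure β) [SFinite μ] [SFinite ν] {f : α → ℝ≥0∞} {g : β → ℝ≥0∞}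
    (hf : Measurable f) (hg : Measurable g) (s : Set α) (t : Set β) :
    ∫⁻ p in s ×ˢ t, f p.1 * g p.2 ∂μ.prod ν = (∫⁻ x in s, f x ∂μ) * ∫⁻ y in t, g y ∂ν := by
  rw [← Measure.prod_restrict, lintegral_prod_mul hf.aemeasurable hg.aemeasurable]

theorem setLIntegral_Ioc_zero_pow (n : ℕ) {R : ℝ} (hR : 0 ≤ R) :
    ∫⁻ r in Ioc 0 R, ENNReal.ofReal (r ^ n) = ENNReal.ofReal (R ^ (n + 1) / (n + 1)) := by
  rw [← ofReal_integral_eq_lintegral_ofReal (continuous_pow n).integrableOn_Ioc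
    ((ae_restrict_iff' measurableSet_Ioc).2 (ae_of_all _ fun r hr ↦ pow_nonneg hr.1.le n)),
    ← intervalIntegral.integral_of_le hR, integral_pow]
  simp

theorem setLIntegral_Ioo_neg_pi_pi_of_periodic {ψ : ℝ → ℝ} (hψ : Continuous ψ)
    (hper : Function.Periodic ψ (2 * π)) (hψ0 : ∀ θ, 0 ≤ ψ θ) :
    ∫⁻ θ in Ioo (-π) π, ENNReal.ofReal (ψ θ) = ENNReal.ofReal (∫ θ in 0..2 * π, ψ θ) := by
  rw [← ofReal_integral_eq_lintegral_ofReal (hψ.integrableOn_Icc.mono_set Ioo_subset_Icc_self)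
      (ae_of_all _ hψ0),
    ← integral_Ioc_eq_integral_Ioo, ← intervalIntegral.integral_of_le (by linarith [pi_pos]),
    ← zero_add (2 * π), ← hper.intervalIntegral_add_eq (-π) 0]
  ring_nf

theorem setLIntegral_shear_preimage_disk (n : ℕ) (κ : ℝ) {l : ℝ} (hl : l ≠ 0) (t R : ℝ) :
    ∫⁻ x in {x : ℝ × ℝ | x.1 ^ 2 + (κ * x.1 + l * x.2) ^ 2 ≤ R ^ 2},
        ENNReal.ofReal ((t * (x.1 ^ 2 + x.2 ^ 2)) ^ ((n : ℝ) / 2)) =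
      ENNReal.ofReal |l⁻¹| * ∫⁻ y in {y : ℝ × ℝ | y.1 ^ 2 + y.2 ^ 2 ≤ R ^ 2},
        ENNReal.ofReal ((t * (y.1 ^ 2 + ((y.2 - κ * y.1) / l) ^ 2)) ^ ((n : ℝ) / 2)) := by
  rw [show l⁻¹ = (LinearMap.det (shear κ l))⁻¹ by rw [det_shear],
    ← setLIntegral_preimage_comp_linearMap volume (by rwa [det_shear])
      (measurableSet_le (by fun_prop) measurable_const) (by fun_prop)]
  simp only [preimage_ofPred_eq, shear_apply, add_sub_cancel_left, mul_div_cancel_left₀ _ hl]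

theorem setLIntegral_disk_rpow_shearedQuadratic (n : ℕ) (κ l : ℝ) {t R : ℝ} (ht : 0 ≤ t)
    (hR : 0 ≤ R) :
    ∫⁻ y in {y : ℝ × ℝ | y.1 ^ 2 + y.2 ^ 2 ≤ R ^ 2},
        ENNReal.ofReal ((t * (y.1 ^ 2 + ((y.2 - κ * y.1) / l) ^ 2)) ^ ((n : ℝ) / 2)) =
      ENNReal.ofReal (t ^ ((n : ℝ) / 2) * (R ^ (n + 2) / (n + 2)) *
        ∫ θ in 0..2 * π, (cos θ ^ 2 + (1 / l ^ 2) * (sin θ - κ * cos θ) ^ 2) ^ ((n : ℝ) / 2)) := by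
  set φ : ℝ → ℝ := fun θ ↦ cos θ ^ 2 + (1 / l ^ 2) * (sin θ - κ * cos θ) ^ 2 with hφ
  have hφ0 (θ : ℝ) : 0 ≤ φ θ := by positivity
  have hpolar : ∀ p ∈ Ioc 0 R ×ˢ Ioo (-π) π, ENNReal.ofReal p.1 *
      ENNReal.ofReal ((t * ((polarCoord.symm p).1 ^ 2 +
        (((polarCoord.symm p).2 - κ * (polarCoord.symm p).1) / l) ^ 2)) ^ ((n : ℝ) / 2)) =
      ENNReal.ofReal (t ^ ((n : ℝ) / 2)) *
        (ENNReal.ofReal (p.1 ^ (n + 1)) * ENNReal.ofReal (φ p.2 ^ ((n : ℝ) / 2))) := by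
    rintro ⟨r, θ⟩ ⟨hr, -⟩
    have hr0 : 0 ≤ r := hr.1.le
    have hquad : t * ((r * cos θ) ^ 2 + ((r * sin θ - κ * (r * cos θ)) / l) ^ 2) =
        r ^ 2 * (t * φ θ) := by
      rw [hφ]
      ring
    rw [polarCoord_symm_apply, hquad, mul_rpow (sq_nonneg r) (by positivity),
      rpow_div_two_eq_sqrt _ (sq_nonneg r), sqrt_sq hr0, rpow_natCast, mul_rpow ht (hφ0 θ),
      ← ENNReal.ofReal_mul hr0, ← ENNReal.ofReal_mul (pow_nonneg hr0 _),
      ← ENNReal.ofReal_mul (by positivity)]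
    congr 1
    ring
  have hψ : Continuous fun θ ↦ φ θ ^ ((n : ℝ) / 2) :=
    (by fun_prop : Continuous φ).rpow_const fun _ ↦ Or.inr (by positivity)
  have hper : Function.Periodic (fun θ ↦ φ θ ^ ((n : ℝ) / 2)) (2 * π) := fun θ ↦ by
    simp [hφ, cos_add_two_pi, sin_add_two_pi]
  rw [setLIntegral_disk_eq_polarCoord hR,
    setLIntegral_congr_fun (measurableSet_Ioc.prod measurableSet_Ioo) hpolar,
    lintegral_const_mul' _ _ ENNReal.ofReal_ne_top, Measure.volume_eq_prod,
    setLIntegral_prod_mul volume volume (f := fun r ↦ ENNReal.ofReal (r ^ (n + 1)))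
      (g := fun θ ↦ ENNReal.ofReal (φ θ ^ ((n : ℝ) / 2))) (by fun_prop) (by fun_prop),
    setLIntegral_Ioc_zero_pow _ hR,
    setLIntegral_Ioo_neg_pi_pi_of_periodic hψ hper fun θ ↦ rpow_nonneg (hφ0 θ) _,
    ← ENNReal.ofReal_mul (by positivity), ← ENNReal.ofReal_mul (by positivity)]
  congr 1
  push_cast
  ring

/-- For `ρ ≥ 0`, `t > 0`, `κ ∈ ℝ`, `λ > 0`, the volume of
`{(α₁,α₂,β) : α₁² + (κα₁+λα₂)² ≤ 1/t², Σ βⱼ² ≤ t(α₁²+α₂²)}` equals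
`(π^(ρ/2) / ((ρ+2)·Γ(ρ/2+1)·λ·t^((ρ+4)/2))) · ∫₀^{2π} (cos²θ + (1/λ²)(sinθ-κcosθ)²)^(ρ/2) dθ`. -/
theorem volume_sheared_region (ρ : ℕ) (t κ l : ℝ) (ht : 0 < t) (hl : 0 < l) :
    volume {p : ℝ × ℝ × (Fin ρ → ℝ) |
        p.1 ^ 2 + (κ * p.1 + l * p.2.1) ^ 2 ≤ 1 / t ^ 2 ∧
        (∑ j, (p.2.2 j) ^ 2) ≤ t * (p.1 ^ 2 + p.2.1 ^ 2)}
      = ENNReal.ofReal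
          (π ^ ((ρ : ℝ) / 2) /
              (((ρ : ℝ) + 2) * Real.Gamma ((ρ : ℝ) / 2 + 1) * l * t ^ (((ρ : ℝ) + 4) / 2)) *
            ∫ θ in (0 : ℝ)..(2 * π),
              (Real.cos θ ^ 2 + (1 / l ^ 2) * (Real.sin θ - κ * Real.cos θ) ^ 2)
                ^ ((ρ : ℝ) / 2)) := by
  rw [← one_div_pow t 2]
  set E := {x : ℝ × ℝ | x.1 ^ 2 + (κ * x.1 + l * x.2) ^ 2 ≤ (1 / t) ^ 2}
  have hpow : t ^ ((ρ : ℝ) / 2) * t ^ (((ρ : ℝ) + 4) / 2) = t ^ (ρ + 2) := by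
    rw [← rpow_add ht, ← rpow_natCast]
    push_cast
    ring_nf
  calc _ = volume.prod volume {q : (ℝ × ℝ) × (Fin ρ → ℝ) |
          q.1 ∈ E ∧ ∑ j, q.2 j ^ 2 ≤ t * (q.1.1 ^ 2 + q.1.2 ^ 2)} :=
        (volume_preserving_prodAssoc.measure_preimage_equiv _).symm
    _ = ENNReal.ofReal (π ^ ((ρ : ℝ) / 2) / Gamma ((ρ : ℝ) / 2 + 1)) *
          ∫⁻ x in E, ENNReal.ofReal ((t * (x.1 ^ 2 + x.2 ^ 2)) ^ ((ρ : ℝ) / 2)) := by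
        rw [prod_volume_setOf_mem_and_sum_sq_le volume (Fin ρ) (E := E)
          (measurableSet_le (by fun_prop) measurable_const) (f := fun x ↦ t * (x.1 ^ 2 + x.2 ^ 2))
          (by fun_prop) fun x _ ↦ by positivity, Fintype.card_fin]
    _ = _ := by
        rw [setLIntegral_shear_preimage_disk ρ κ hl.ne',
          setLIntegral_disk_rpow_shearedQuadratic ρ κ l ht.le (by positivity), one_div_pow,
          ← ENNReal.ofReal_mul (by positivity), ← ENNReal.ofReal_mul (by positivity),
          abs_of_pos (inv_pos.2 hl), ← hpow, ← mul_assoc, ← mul_assoc]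
        congr 2
        field_simp
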